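/- Let (G,σ,w) be a positive-connected signed graph with consensus index ε₀. For any ε₁ < ε₂ < ε₀ and all vertices i,j ∈ V, the ε-repelling costs satisfy Ω_{ε₁}(i,j) ≤ Ω_{ε₂}(i,j). In particular, since L_{−1} = L₊ + L₋ is the Laplacian of the underlying graph G, for every 0 < ε < ε₀ the effective resistance Ω(i,j) of the underlying graph satisfies Ω(i,j) ≤ Ω_ε(i,j). -/

import Mathlib

open Matrix BigOperators

open scoped Classical

/-- Moore–Penrose pseudoinverse of a square real matrix (chosen via the
defining Penrose equations; it is unique when it exists). -/
noncomputable def pinv {n : ℕ} (A : Matrix (Fin n) (Fin n) ℝ) : Matrix (Fin n) (Fin n) ℝ :=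
  if h : ∃ B : Matrix (Fin n) (Fin n) ℝ,
      A * B * A = A ∧ B * A * B = B ∧ (A * B)ᵀ = A * B ∧ (B * A)ᵀ = B * A
  then h.choose else 0

/-- The eigenvalues of a symmetric real matrix, sorted in nondecreasing order. -/
noncomputable def sortedEigs {n : ℕ} (A : Matrix (Fin n) (Fin n) ℝ) : List ℝ :=
  if h : A.IsHermitian then (Finset.univ.val.map h.eigenvalues).sort (· ≤ ·) else []

/-- The second smallest eigenvalue (with multiplicity) of a symmetric real matrix. -/
noncomputable def secondSmallestEig {n : ℕ} (A : Matrix (Fin n) (Fin n) ℝ) : ℝ :=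
  (sortedEigs A).getD 1 0

/-- The largest eigenvalue of a symmetric real matrix. -/
noncomputable def largestEig {n : ℕ} (A : Matrix (Fin n) (Fin n) ℝ) : ℝ :=
  (sortedEigs A).getD (n - 1) 0

/-- A signed weighted graph on `n` vertices, given by the positive-part and
negative-part weight functions (an edge carries a positive weight and a sign;
`wplus i j > 0` iff `(i,j)` is a positive edge, `wminus i j > 0` iff it is a
negative edge). -/
structure SignedGraph (n : ℕ) where
  wplus : Fin n → Fin n → ℝ
  wminus : Fin n → Fin n → ℝ
  wplus_symm : ∀ i j, wplus i j = wplus j i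
  wminus_symm : ∀ i j, wminus i j = wminus j i
  wplus_nonneg : ∀ i j, 0 ≤ wplus i j
  wminus_nonneg : ∀ i j, 0 ≤ wminus i j
  wplus_diag : ∀ i, wplus i i = 0
  wminus_diag : ∀ i, wminus i i = 0
  disjoint : ∀ i j, wplus i j = 0 ∨ wminus i j = 0

namespace SignedGraph

variable {n : ℕ} (Γ : SignedGraph n)

/-- positive degree -/
noncomputable def dplus (i : Fin n) : ℝ := ∑ j, Γ.wplus i j

/-- negative degree -/
noncomputable def dminus (i : Fin n) : ℝ := ∑ j, Γ.wminus i j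

/-- Laplacian of the positive subgraph -/
noncomputable def Lplus : Matrix (Fin n) (Fin n) ℝ :=
  Matrix.of fun i j => if i = j then Γ.dplus i else -Γ.wplus i j

/-- Laplacian of the negative subgraph -/
noncomputable def Lminus : Matrix (Fin n) (Fin n) ℝ :=
  Matrix.of fun i j => if i = j then Γ.dminus i else -Γ.wminus i j

/-- the ε-repelling Laplacian `L₊ - ε L₋` -/
noncomputable def Leps (ε : ℝ) : Matrix (Fin n) (Fin n) ℝ := Γ.Lplus - ε • Γ.Lminus

/-- the positive subgraph as a simple graph -/
def posGraph : SimpleGraph (Fin n) := SimpleGraph.fromRel (fun i j => 0 < Γ.wplus i j)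

/-- the negative subgraph as a simple graph -/
def negGraph : SimpleGraph (Fin n) := SimpleGraph.fromRel (fun i j => 0 < Γ.wminus i j)

/-- the underlying simple graph -/
def underlying : SimpleGraph (Fin n) :=
  SimpleGraph.fromRel (fun i j => 0 < Γ.wplus i j + Γ.wminus i j)

/-- the signed graph is positive-connected -/
def PosConnected : Prop := Γ.posGraph.Connected

/-- the signed graph is negative-connected -/
def NegConnected : Prop := Γ.negGraph.Connected

/-- the consensus index ε₀ -/
noncomputable def consensusIndex : ℝ :=
  sSup {ε : ℝ | 0 < ε ∧ (Γ.Leps ε).PosSemidef ∧ (Γ.Leps ε).rank = n - 1}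

/-- the ε-repelling cost Ω_ε(i,j) = (e_i - e_j)ᵀ L_ε† (e_i - e_j) -/
noncomputable def cost (ε : ℝ) (i j : Fin n) : ℝ :=
  (Pi.single i 1 - Pi.single j 1) ⬝ᵥ (pinv (Γ.Leps ε)) *ᵥ (Pi.single i 1 - Pi.single j 1)

/-- the ε-repelling matrix Ω_ε -/
noncomputable def costMatrix (ε : ℝ) : Matrix (Fin n) (Fin n) ℝ :=
  Matrix.of fun i j => Γ.cost ε i j

/-- the node ε-repelling curvature, the unique solution of Ω_ε τ_ε = n·1 -/
noncomputable def tau (ε : ℝ) : Fin n → ℝ :=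
  (Γ.costMatrix ε)⁻¹ *ᵥ (fun _ => (n : ℝ))

/-- φ_ε = n · 1ᵀ Ω_ε⁻¹ 1 -/
noncomputable def phi (ε : ℝ) : ℝ :=
  (n : ℝ) * ((fun _ => (1 : ℝ)) ⬝ᵥ ((Γ.costMatrix ε)⁻¹ *ᵥ fun _ => (1 : ℝ)))

/-- the quantity Λ_ε(i,j) appearing in the edge ε-repelling curvature -/
noncomputable def Lam (ε : ℝ) (i j : Fin n) : ℝ :=
  (Γ.dminus i + Γ.dminus j)
    - (∑ k, Γ.cost ε j k * Γ.wminus i k + ∑ k, Γ.cost ε i k * Γ.wminus j k) / Γ.cost ε i j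

/-- the edge ε-repelling curvature ϑ_ε(i,j) -/
noncomputable def edgeCurv (ε : ℝ) (i j : Fin n) : ℝ :=
  2 * (Γ.tau ε i + Γ.tau ε j) / Γ.cost ε i j + (1 + ε) * Γ.Lam ε i j

end SignedGraph

/-!
For symmetric positive semidefinite matrices `A ⪰ B` with the same kernel, `A† ⪯ B†` as quadratic
forms: `xᵀ A† x = 2 xᵀ y - yᵀ A y` at `y = A† x`, this is at most `2 xᵀ y - yᵀ B y`, and on the
range of `B` the latter is bounded by `xᵀ B† x`, since `B† x` maximises `y ↦ 2 xᵀ y - yᵀ B y`.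

Here `L_{ε₁} - L_{ε₂} = (ε₂ - ε₁) L₋ ⪰ 0`, and below the consensus index some `L_{ε'}` with
`ε' > ε₂` is positive semidefinite; then `vᵀ L_{ε₂} v = 0` forces `vᵀ L₋ v = 0`, so `L_{ε₁}` and
`L_{ε₂}` have the same kernel. The bound by the effective resistance is the case `ε₁ = -1`.
-/

section MoorePenrose

variable {ι R : Type*} [Fintype ι] [CommRing R]

def IsPinv (A B : Matrix ι ι R) : Prop :=
  A * B * A = A ∧ B * A * B = B ∧ (A * B)ᵀ = A * B ∧ (B * A)ᵀ = B * A

theorem IsPinv.unique {A B C : Matrix ι ι R} (hB : IsPinv A B) (hC : IsPinv A C) : B = C := by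
  obtain ⟨hABA, hBAB, hAB, hBA⟩ := hB
  obtain ⟨hACA, hCAC, hAC, hCA⟩ := hC
  have hB : B = B * A * C := calc
    B = B * (A * B)ᵀ := by rw [hAB, ← mul_assoc, hBAB]
    _ = B * (A * C * A * B)ᵀ := by rw [hACA]
    _ = B * ((A * B)ᵀ * (A * C)ᵀ) := by simp only [transpose_mul, mul_assoc]
    _ = B * A * C := by simp only [hAB, hAC, ← mul_assoc, hBAB]
  have hC : C = B * A * C := calc
    C = (C * A)ᵀ * C := by rw [hCA, hCAC]
    _ = (C * (A * B * A))ᵀ * C := by rw [hABA]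
    _ = (B * A)ᵀ * (C * A)ᵀ * C := by simp only [transpose_mul, mul_assoc]
    _ = B * A * C := by rw [hBA, hCA, mul_assoc, mul_assoc, hCAC, mul_assoc]
  rw [hB, ← hC]

end MoorePenrose

namespace Matrix

section RealSymmetric

variable {ι : Type*} [Fintype ι] [DecidableEq ι] {M : Matrix ι ι ℝ}

theorem cfc_mul_cfc (M : Matrix ι ι ℝ) (f g : ℝ → ℝ) :
    cfc f M * cfc g M = cfc (fun x => f x * g x) M :=
  (cfc_mul f g M (M.finite_spectrum.continuousOn _) (M.finite_spectrum.continuousOn _)).symm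

omit [DecidableEq ι] in
theorem IsHermitian.mulVec_dotProduct (hM : M.IsHermitian) (x y : ι → ℝ) :
    M *ᵥ x ⬝ᵥ y = x ⬝ᵥ M *ᵥ y := by
  rw [dotProduct_comm, ← dotProduct_transpose_mulVec, (isHermitian_iff_isSymm.mp hM).eq]

theorem IsHermitian.isPinv_cfc_inv (hM : M.IsHermitian) : IsPinv M (cfc (·⁻¹ : ℝ → ℝ) M) := by
  have hsymm (f : ℝ → ℝ) : (cfc f M)ᵀ = cfc f M :=
    (isHermitian_iff_isSymm.mp (IsSelfAdjoint.cfc (f := f) (a := M)).isHermitian).eq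
  have h : IsPinv (cfc (fun x : ℝ => x) M) (cfc (·⁻¹ : ℝ → ℝ) M) := by
    refine ⟨?_, ?_, ?_, ?_⟩ <;> simp only [cfc_mul_cfc, hsymm]
    · simp only [mul_inv_mul_cancel]
    · simpa using congrArg (cfc · M) (funext fun x : ℝ => mul_inv_mul_cancel x⁻¹)
  rwa [cfc_id' ℝ M hM.isSelfAdjoint] at h

theorem IsHermitian.mul_self_mul_cfc_inv (hM : M.IsHermitian) :
    M * M * cfc (·⁻¹ : ℝ → ℝ) M = M := by
  have h : cfc (fun x : ℝ => x) M * cfc (fun x : ℝ => x) M * cfc (·⁻¹ : ℝ → ℝ) M =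
      cfc (fun x : ℝ => x) M := by
    simp only [cfc_mul_cfc, mul_self_mul_inv]
  rwa [cfc_id' ℝ M hM.isSelfAdjoint] at h

theorem IsHermitian.cfc_inv_mul_cfc_inv_mul_self (hM : M.IsHermitian) :
    cfc (·⁻¹ : ℝ → ℝ) M * cfc (·⁻¹ : ℝ → ℝ) M * M = cfc (·⁻¹ : ℝ → ℝ) M := by
  have h : cfc (·⁻¹ : ℝ → ℝ) M * cfc (·⁻¹ : ℝ → ℝ) M * cfc (fun x : ℝ => x) M =
      cfc (·⁻¹ : ℝ → ℝ) M := by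
    simpa [cfc_mul_cfc] using congrArg (cfc · M) (funext fun x : ℝ => mul_self_mul_inv x⁻¹)
  rwa [cfc_id' ℝ M hM.isSelfAdjoint] at h

end RealSymmetric

variable {n : ℕ} {A B : Matrix (Fin n) (Fin n) ℝ}

theorem IsHermitian.pinv_eq_cfc_inv (hA : A.IsHermitian) : pinv A = cfc (·⁻¹ : ℝ → ℝ) A := by
  have hex : ∃ P, IsPinv A P := ⟨_, hA.isPinv_cfc_inv⟩
  unfold IsPinv at hex
  rw [pinv, dif_pos hex]
  exact IsPinv.unique hex.choose_spec hA.isPinv_cfc_inv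

theorem IsHermitian.isHermitian_pinv (hA : A.IsHermitian) : (pinv A).IsHermitian := by
  rw [hA.pinv_eq_cfc_inv]
  exact IsSelfAdjoint.cfc.isHermitian

theorem IsHermitian.pinv_mul_self_mul_pinv (hA : A.IsHermitian) : pinv A * A * pinv A = pinv A :=
  hA.pinv_eq_cfc_inv ▸ hA.isPinv_cfc_inv.2.1

theorem IsHermitian.mul_self_mul_pinv (hA : A.IsHermitian) : A * A * pinv A = A :=
  hA.pinv_eq_cfc_inv ▸ hA.mul_self_mul_cfc_inv

theorem IsHermitian.pinv_mulVec_eq_zero (hA : A.IsHermitian) {v : Fin n → ℝ}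
    (hv : A *ᵥ v = 0) : pinv A *ᵥ v = 0 := by
  rw [hA.pinv_eq_cfc_inv, ← hA.cfc_inv_mul_cfc_inv_mul_self, ← mulVec_mulVec, hv, mulVec_zero]

theorem PosSemidef.two_mul_dotProduct_sub_le_pinv (hB : B.PosSemidef) (x y : Fin n → ℝ) :
    2 * (B *ᵥ (pinv B *ᵥ x) ⬝ᵥ y) - y ⬝ᵥ B *ᵥ y ≤ x ⬝ᵥ pinv B *ᵥ x := by
  have hB' := hB.isHermitian
  have hform : pinv B *ᵥ x ⬝ᵥ B *ᵥ (pinv B *ᵥ x) = x ⬝ᵥ pinv B *ᵥ x := by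
    rw [hB'.isHermitian_pinv.mulVec_dotProduct, mulVec_mulVec, mulVec_mulVec,
      hB'.pinv_mul_self_mul_pinv]
  have hcomm : y ⬝ᵥ B *ᵥ (pinv B *ᵥ x) = pinv B *ᵥ x ⬝ᵥ B *ᵥ y := by
    rw [← hB'.mulVec_dotProduct, dotProduct_comm]
  have hsq := hB.dotProduct_mulVec_nonneg (pinv B *ᵥ x - y)
  rw [star_trivial, mulVec_sub, dotProduct_sub, sub_dotProduct, sub_dotProduct, hcomm] at hsq
  rw [hB'.mulVec_dotProduct]
  linarith

theorem dotProduct_pinv_mulVec_le_of_posSemidef_sub (hB : B.PosSemidef)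
    (hAB : (A - B).PosSemidef) (hker : ∀ v, B *ᵥ v = 0 → A *ᵥ v = 0) (x : Fin n → ℝ) :
    x ⬝ᵥ pinv A *ᵥ x ≤ x ⬝ᵥ pinv B *ᵥ x := by
  have hA : A.IsHermitian := by simpa using (hAB.add hB).isHermitian
  have hP := hA.isHermitian_pinv
  set y := pinv A *ᵥ x
  have hyAy : y ⬝ᵥ A *ᵥ y = x ⬝ᵥ y := by
    rw [hP.mulVec_dotProduct, mulVec_mulVec, mulVec_mulVec, hA.pinv_mul_self_mul_pinv]
  have hyBy : y ⬝ᵥ B *ᵥ y ≤ y ⬝ᵥ A *ᵥ y := by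
    have := hAB.dotProduct_mulVec_nonneg y
    rw [star_trivial, sub_mulVec, dotProduct_sub] at this
    linarith
  -- `x` and its projection `B B† x` onto the range of `B` differ by a vector of `ker B ⊆ ker A`.
  have hproj : x ⬝ᵥ y = B *ᵥ (pinv B *ᵥ x) ⬝ᵥ y := by
    have hk : B *ᵥ (x - B *ᵥ (pinv B *ᵥ x)) = 0 := by
      rw [mulVec_sub, mulVec_mulVec, mulVec_mulVec, hB.isHermitian.mul_self_mul_pinv, sub_self]
    rw [← sub_eq_zero, ← sub_dotProduct, ← hP.mulVec_dotProduct,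
      hA.pinv_mulVec_eq_zero (hker _ hk), zero_dotProduct]
  calc x ⬝ᵥ y = 2 * (x ⬝ᵥ y) - y ⬝ᵥ A *ᵥ y := by rw [hyAy]; ring
    _ ≤ 2 * (x ⬝ᵥ y) - y ⬝ᵥ B *ᵥ y := by linarith
    _ = 2 * (B *ᵥ (pinv B *ᵥ x) ⬝ᵥ y) - y ⬝ᵥ B *ᵥ y := by rw [hproj]
    _ ≤ x ⬝ᵥ pinv B *ᵥ x := hB.two_mul_dotProduct_sub_le_pinv x y

end Matrix

section WeightedLaplacian

variable {ι : Type*} [Fintype ι] [DecidableEq ι]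

def weightedLaplacian (w : ι → ι → ℝ) : Matrix ι ι ℝ :=
  of fun i j => if i = j then ∑ k, w i k else -w i j

variable {w : ι → ι → ℝ}

theorem weightedLaplacian_mulVec (hdiag : ∀ i, w i i = 0) (x : ι → ℝ) (i : ι) :
    (weightedLaplacian w *ᵥ x) i = ∑ j, w i j * (x i - x j) := by
  have hrow : ∀ j, weightedLaplacian w i j = (if i = j then ∑ k, w i k else 0) - w i j := by
    intro j
    by_cases hij : i = j
    · simp [weightedLaplacian, hij, hdiag]
    · simp [weightedLaplacian, hij]
  simp only [mulVec, dotProduct, hrow, sub_mul, Finset.sum_sub_distrib, ite_mul, zero_mul,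
    Finset.sum_ite_eq, Finset.mem_univ, if_true, Finset.sum_mul, mul_sub]

theorem posSemidef_weightedLaplacian (hsymm : ∀ i j, w i j = w j i) (hnonneg : ∀ i j, 0 ≤ w i j)
    (hdiag : ∀ i, w i i = 0) : (weightedLaplacian w).PosSemidef := by
  refine PosSemidef.of_dotProduct_mulVec_nonneg ?_ fun x => ?_
  · refine IsHermitian.ext fun i j => ?_
    by_cases hij : i = j
    · simp [hij]
    · simp [weightedLaplacian, hij, Ne.symm hij, hsymm i j]
  have hquad : x ⬝ᵥ weightedLaplacian w *ᵥ x = ∑ i, ∑ j, w i j * x i * (x i - x j) := by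
    simp only [dotProduct, weightedLaplacian_mulVec hdiag, Finset.mul_sum]
    exact Finset.sum_congr rfl fun i _ => Finset.sum_congr rfl fun j _ => by ring
  have hswap : ∑ i, ∑ j, w i j * x i * (x i - x j) = ∑ i, ∑ j, w i j * x j * (x j - x i) := by
    rw [Finset.sum_comm]
    exact Finset.sum_congr rfl fun i _ => Finset.sum_congr rfl fun j _ => by rw [hsymm]
  have hsq : ∑ i, ∑ j, w i j * (x i - x j) ^ 2 =
      ∑ i, ∑ j, w i j * x i * (x i - x j) + ∑ i, ∑ j, w i j * x j * (x j - x i) := by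
    simp only [← Finset.sum_add_distrib]
    exact Finset.sum_congr rfl fun i _ => Finset.sum_congr rfl fun j _ => by ring
  have hnonneg : 0 ≤ ∑ i, ∑ j, w i j * (x i - x j) ^ 2 :=
    Finset.sum_nonneg fun i _ => Finset.sum_nonneg fun j _ => mul_nonneg (hnonneg i j) (sq_nonneg _)
  rw [star_trivial, hquad]
  linarith

end WeightedLaplacian

namespace SignedGraph

variable {n : ℕ} (Γ : SignedGraph n)

theorem posSemidef_Lplus : Γ.Lplus.PosSemidef :=
  posSemidef_weightedLaplacian Γ.wplus_symm Γ.wplus_nonneg Γ.wplus_diag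

theorem posSemidef_Lminus : Γ.Lminus.PosSemidef :=
  posSemidef_weightedLaplacian Γ.wminus_symm Γ.wminus_nonneg Γ.wminus_diag

theorem Leps_eq_add_smul (a b : ℝ) : Γ.Leps a = Γ.Leps b + (b - a) • Γ.Lminus := by
  simp only [Leps, sub_smul]
  abel

theorem Leps_neg_one : Γ.Leps (-1) = Γ.Lplus + Γ.Lminus := by
  rw [Leps, neg_smul, one_smul, sub_neg_eq_add]

theorem posSemidef_Leps_of_le {a b : ℝ} (hab : a ≤ b) (hb : (Γ.Leps b).PosSemidef) :
    (Γ.Leps a).PosSemidef := by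
  rw [Γ.Leps_eq_add_smul a b]
  exact hb.add (Γ.posSemidef_Lminus.smul (sub_nonneg.mpr hab))

theorem exists_gt_posSemidef_Leps {ε : ℝ} (hε : ε < Γ.consensusIndex) :
    ∃ ε' > ε, (Γ.Leps ε').PosSemidef := by
  by_cases hneg : ε < 0
  · refine ⟨0, hneg, ?_⟩
    simpa [Leps] using Γ.posSemidef_Lplus
  -- `sSup ∅ = 0` in `ℝ`, so `0 ≤ ε < ε₀` forces the defining set to be nonempty
  have hne : {ε : ℝ | 0 < ε ∧ (Γ.Leps ε).PosSemidef ∧ (Γ.Leps ε).rank = n - 1}.Nonempty := by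
    by_contra hempty
    rw [Set.not_nonempty_iff_eq_empty] at hempty
    rw [consensusIndex, hempty, Real.sSup_empty] at hε
    exact hneg hε
  obtain ⟨ε', ⟨-, hpsd, -⟩, hlt⟩ := exists_lt_of_lt_csSup hne hε
  exact ⟨ε', hlt, hpsd⟩

theorem posSemidef_Leps {ε : ℝ} (hε : ε < Γ.consensusIndex) : (Γ.Leps ε).PosSemidef := by
  obtain ⟨ε', hlt, hpsd⟩ := Γ.exists_gt_posSemidef_Leps hε
  exact Γ.posSemidef_Leps_of_le hlt.le hpsd

theorem Lminus_mulVec_eq_zero {ε : ℝ} (hε : ε < Γ.consensusIndex) {v : Fin n → ℝ}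
    (hv : Γ.Leps ε *ᵥ v = 0) : Γ.Lminus *ᵥ v = 0 := by
  obtain ⟨ε', hlt, hpsd⟩ := Γ.exists_gt_posSemidef_Leps hε
  have hsplit : v ⬝ᵥ Γ.Leps ε' *ᵥ v + (ε' - ε) * (v ⬝ᵥ Γ.Lminus *ᵥ v) = 0 := by
    rw [← smul_eq_mul, ← dotProduct_smul, ← smul_mulVec, ← dotProduct_add, ← add_mulVec,
      ← Γ.Leps_eq_add_smul, hv, dotProduct_zero]
  have h1 := hpsd.dotProduct_mulVec_nonneg v
  have h2 := Γ.posSemidef_Lminus.dotProduct_mulVec_nonneg v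
  rw [star_trivial] at h1 h2
  have hzero : v ⬝ᵥ Γ.Lminus *ᵥ v = 0 := by nlinarith
  rw [← Γ.posSemidef_Lminus.dotProduct_mulVec_zero_iff, star_trivial, hzero]

theorem cost_le_cost {ε₁ ε₂ : ℝ} (h : ε₁ ≤ ε₂) (hε₂ : ε₂ < Γ.consensusIndex) (i j : Fin n) :
    Γ.cost ε₁ i j ≤ Γ.cost ε₂ i j := by
  refine dotProduct_pinv_mulVec_le_of_posSemidef_sub (Γ.posSemidef_Leps hε₂) ?_ (fun v hv => ?_) _
  · rw [Γ.Leps_eq_add_smul ε₁ ε₂, add_sub_cancel_left]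
    exact Γ.posSemidef_Lminus.smul (sub_nonneg.mpr h)
  · rw [Γ.Leps_eq_add_smul ε₁ ε₂, add_mulVec, hv, smul_mulVec, Γ.Lminus_mulVec_eq_zero hε₂ hv,
      smul_zero, add_zero]

end SignedGraph

theorem stmt2_general {n : ℕ} (Γ : SignedGraph n) :
    (∀ ε₁ ε₂ : ℝ, ε₁ < ε₂ → ε₂ < Γ.consensusIndex →
      ∀ i j : Fin n, Γ.cost ε₁ i j ≤ Γ.cost ε₂ i j) ∧
    (∀ ε : ℝ, 0 < ε → ε < Γ.consensusIndex → ∀ i j : Fin n,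
      (Pi.single i 1 - Pi.single j 1) ⬝ᵥ
          (pinv (Γ.Lplus + Γ.Lminus)) *ᵥ (Pi.single i 1 - Pi.single j 1)
        ≤ Γ.cost ε i j) := by
  refine ⟨fun ε₁ ε₂ h hε₂ => Γ.cost_le_cost h.le hε₂, fun ε hε hε₀ i j => ?_⟩
  rw [← Γ.Leps_neg_one]
  exact Γ.cost_le_cost (by linarith) hε₀ i j

/-- monotonicity of the ε-repelling cost in ε; in particular the
effective resistance of the underlying graph is at most the ε-repelling cost
for 0 < ε < ε₀. -/
theorem stmt2 {n : ℕ} (Γ : SignedGraph n) (hpc : Γ.PosConnected) :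
    (∀ ε₁ ε₂ : ℝ, ε₁ < ε₂ → ε₂ < Γ.consensusIndex →
      ∀ i j : Fin n, Γ.cost ε₁ i j ≤ Γ.cost ε₂ i j) ∧
    (∀ ε : ℝ, 0 < ε → ε < Γ.consensusIndex → ∀ i j : Fin n,
      (Pi.single i 1 - Pi.single j 1) ⬝ᵥ
          (pinv (Γ.Lplus + Γ.Lminus)) *ᵥ (Pi.single i 1 - Pi.single j 1)
        ≤ Γ.cost ε i j) :=
  stmt2_general Γ
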